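/- arXiv:2503.08654 — 9 statements merged into one kernel-verified Lean document; each statement's English description precedes it below -/
import Mathlib

section
/- In a semi-FTvN system, the map λ is positively homogeneous: λ(αx) = α·λ(x) for all x in V and all α ≥ 0. -/
open scoped RealInnerProductSpace Matrix

theorem stmt0 {V W : Type*} [NormedAddCommGroup V] [InnerProductSpace ℝ V]
    [NormedAddCommGroup W] [InnerProductSpace ℝ W] (lam : V → W)
    (h1 : ∀ x : V, ‖lam x‖ = ‖x‖)
    (h2 : ∀ x y : V, ⟪x, y⟫ ≤ ⟪lam x, lam y⟫)
    (x : V) (α : ℝ) (hα : 0 ≤ α) : lam (α • x) = α • lam x := by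
  have key : ⟪lam (α • x), lam x⟫ ≥ α * ‖x‖ ^ 2 := by
    have := h2 (α • x) x
    rwa [real_inner_smul_left, real_inner_self_eq_norm_sq] at this
  have hz : ‖lam (α • x) - α • lam x‖ ^ 2 ≤ 0 := by
    rw [norm_sub_sq_real, norm_smul, h1, h1, real_inner_smul_right]
    have h2' : ‖α • x‖ ^ 2 = α ^ 2 * ‖x‖ ^ 2 := by
      rw [norm_smul]; simp [abs_of_nonneg hα, mul_pow]
    have h3 : ‖α‖ = α := abs_of_nonneg hα
    rw [h2', h3]
    nlinarith [mul_nonneg hα (sub_nonneg.mpr key)]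
  have : lam (α • x) - α • lam x = 0 := by
    have := sq_nonneg ‖lam (α • x) - α • lam x‖
    have hn : ‖lam (α • x) - α • lam x‖ = 0 := by nlinarith
    exact norm_eq_zero.mp hn
  exact sub_eq_zero.mp this
end

section
/- In a semi-FTvN system, the following are equivalent for x, y ∈ V: (a) ⟨x,y⟩ = ⟨λ(x), λ(y)⟩; (b) ‖λ(x) − λ(y)‖ = ‖x − y‖; (c) ‖λ(x+y)‖ = ‖λ(x) + λ(y)‖; (d) λ(x+y) = λ(x) + λ(y). -/
open scoped RealInnerProductSpace Matrix

theorem stmt6 {V W : Type*} [NormedAddCommGroup V] [InnerProductSpace ℝ V]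
    [NormedAddCommGroup W] [InnerProductSpace ℝ W] (lam : V → W)
    (h1 : ∀ x : V, ‖lam x‖ = ‖x‖)
    (h2 : ∀ x y : V, ⟪x, y⟫ ≤ ⟪lam x, lam y⟫)
    (x y : V) :
    (⟪x, y⟫ = ⟪lam x, lam y⟫ ↔ ‖lam x - lam y‖ = ‖x - y‖) ∧
    (‖lam x - lam y‖ = ‖x - y‖ ↔ ‖lam (x + y)‖ = ‖lam x + lam y‖) ∧
    (‖lam (x + y)‖ = ‖lam x + lam y‖ ↔ lam (x + y) = lam x + lam y) := by
  have sqeq : ∀ a b : ℝ, 0 ≤ a → 0 ≤ b → (a = b ↔ a ^ 2 = b ^ 2) := by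
    intro a b ha hb
    constructor
    · rintro rfl; rfl
    · intro h; nlinarith
  have hab : ⟪x, y⟫ = ⟪lam x, lam y⟫ ↔ ‖lam x - lam y‖ = ‖x - y‖ := by
    rw [sqeq _ _ (norm_nonneg _) (norm_nonneg _), norm_sub_sq_real, norm_sub_sq_real,
      h1 x, h1 y]
    constructor <;> intro h <;> nlinarith
  have hac : ⟪x, y⟫ = ⟪lam x, lam y⟫ ↔ ‖lam (x + y)‖ = ‖lam x + lam y‖ := by
    rw [sqeq _ _ (norm_nonneg _) (norm_nonneg _), norm_add_sq_real, h1 (x + y),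
      norm_add_sq_real, h1 x, h1 y]
    constructor <;> intro h <;> nlinarith
  have hcd : ‖lam (x + y)‖ = ‖lam x + lam y‖ ↔ lam (x + y) = lam x + lam y := by
    constructor
    · intro hc
      have key : ‖x + y‖ ^ 2 ≤ ⟪lam (x + y), lam x + lam y⟫ := by
        have := h2 (x + y) x
        have := h2 (x + y) y
        rw [inner_add_right]
        have : ⟪x + y, x⟫ + ⟪x + y, y⟫ = ‖x + y‖ ^ 2 := by
          rw [← inner_add_right, ← real_inner_self_eq_norm_sq]
        linarith
      have hz : ‖lam (x + y) - (lam x + lam y)‖ ^ 2 ≤ 0 := by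
        rw [norm_sub_sq_real, h1 (x + y), ← hc, h1 (x + y)]
        linarith
      have : lam (x + y) - (lam x + lam y) = 0 := by
        have := sq_nonneg ‖lam (x + y) - (lam x + lam y)‖
        have hn : ‖lam (x + y) - (lam x + lam y)‖ = 0 := by nlinarith [norm_nonneg (lam (x + y) - (lam x + lam y))]
        exact norm_eq_zero.mp hn
      exact sub_eq_zero.mp this
    · intro h; rw [h]
  exact ⟨hab, hab.symm.trans hac, hcd⟩
end

section
/- In a semi-FTvN system, every automorphism is an orthogonal (inner-product preserving) linear transformation of V. -/
open scoped RealInnerProductSpace Matrix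

theorem stmt8 {V W : Type*} [NormedAddCommGroup V] [InnerProductSpace ℝ V]
    [NormedAddCommGroup W] [InnerProductSpace ℝ W] (lam : V → W)
    (h1 : ∀ x : V, ‖lam x‖ = ‖x‖)
    (h2 : ∀ x y : V, ⟪x, y⟫ ≤ ⟪lam x, lam y⟫)
    (A : V →L[ℝ] V) (hAbij : Function.Bijective A)
    (hAaut : ∀ x : V, lam (A x) = lam x) :
    ∀ x y : V, ⟪A x, A y⟫ = ⟪x, y⟫ := by
  have hn : ∀ x : V, ‖A x‖ = ‖x‖ := by
    intro x
    rw [← h1 (A x), hAaut, h1]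
  intro x y
  have h3 := real_inner_eq_norm_add_mul_self_sub_norm_mul_self_sub_norm_mul_self_div_two (A x) (A y)
  have h4 := real_inner_eq_norm_add_mul_self_sub_norm_mul_self_sub_norm_mul_self_div_two x y
  rw [h3, h4, ← map_add, hn, hn, hn]
end

section
/- In a semi-FTvN system, if a and b strongly commute, then a and b commute relative to any closed subgroup G of the automorphism group: ⟨Da, b⟩ = 0 for every D ∈ Lie(G). -/
/-!
For every automorphism `A` of a semi-FTvN system and strongly commuting `a`, `b`,
`⟪A a, b⟫ ≤ ⟪λ (A a), λ b⟫ = ⟪λ a, λ b⟫ = ⟪a, b⟫`. Hence `t ↦ ⟪exp (t • D) a, b⟫` attains its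
maximum at `t = 0`, where its derivative is `⟪D a, b⟫`, which must therefore vanish.
-/

open scoped RealInnerProductSpace Nat

open NormedSpace

theorem NormedSpace.summable_expSeries_of_exp_ne_zero (𝕂 : Type*) {𝔸 : Type*} [Field 𝕂]
    [CharZero 𝕂] [Ring 𝔸] [Algebra 𝕂 𝔸] [TopologicalSpace 𝔸] [IsTopologicalRing 𝔸] {x : 𝔸}
    (hx : exp x ≠ 0) :
    Summable fun n => (n !⁻¹ : 𝕂) • x ^ n := by
  by_contra hs
  exact hx (by rw [exp_eq_tsum 𝕂]; exact tsum_eq_zero_of_not_summable hs)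

section

variable {𝕂 𝔸 : Type*} [NontriviallyNormedField 𝕂] [CharZero 𝕂] [ContinuousSMul ℚ 𝕂]
  [NormedRing 𝔸] [NormedAlgebra 𝕂 𝔸]

theorem NormedSpace.hasFPowerSeriesOnBall_exp_smul_of_summable {x : 𝔸}
    (hx : ∀ t : 𝕂, Summable fun n => (n !⁻¹ : 𝕂) • (t • x) ^ n) :
    HasFPowerSeriesOnBall (fun t : 𝕂 => exp (t • x))
      ((expSeries 𝕂 𝔸).compContinuousLinearMap (ContinuousLinearMap.toSpanSingleton 𝕂 x)) 0 ⊤ where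
  r_le := by
    simpa [expSeries_radius_eq_top, ENNReal.top_div_of_ne_top] using
      (expSeries 𝕂 𝔸).div_le_radius_compContinuousLinearMap
        (ContinuousLinearMap.toSpanSingleton 𝕂 x)
  r_pos := ENNReal.zero_lt_top
  hasSum {t} _ := by
    simpa only [zero_add, exp_eq_tsum 𝕂, FormalMultilinearSeries.compContinuousLinearMap_apply,
      Function.comp_def, ContinuousLinearMap.toSpanSingleton_apply, expSeries_apply_eq]
      using (hx t).hasSum

theorem NormedSpace.hasDerivAt_exp_smul_zero_of_summable {x : 𝔸}
    (hx : ∀ t : 𝕂, Summable fun n => (n !⁻¹ : 𝕂) • (t • x) ^ n) :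
    HasDerivAt (fun t : 𝕂 => exp (t • x)) x 0 := by
  simpa only [FormalMultilinearSeries.compContinuousLinearMap_apply, Function.comp_def,
      ContinuousLinearMap.toSpanSingleton_apply, one_smul, expSeries_apply_eq, Nat.factorial_one,
      Nat.cast_one, inv_one, pow_one]
    using (hasFPowerSeriesOnBall_exp_smul_of_summable hx).hasFPowerSeriesAt.hasDerivAt

end

theorem inner_apply_le_of_lam_apply_eq {V W : Type*} [NormedAddCommGroup V] [InnerProductSpace ℝ V]
    [NormedAddCommGroup W] [InnerProductSpace ℝ W] {lam : V → W}
    (h2 : ∀ x y : V, ⟪x, y⟫ ≤ ⟪lam x, lam y⟫) {A : V → V} (hA : ∀ x, lam (A x) = lam x)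
    {a b : V} (hsc : ⟪a, b⟫ = ⟪lam a, lam b⟫) : ⟪A a, b⟫ ≤ ⟪a, b⟫ :=
  calc ⟪A a, b⟫ ≤ ⟪lam (A a), lam b⟫ := h2 _ _
    _ = ⟪a, b⟫ := by rw [hA, hsc]

theorem stmt9_general {V W : Type*} [NormedAddCommGroup V] [InnerProductSpace ℝ V]
    [NormedAddCommGroup W] [InnerProductSpace ℝ W] (lam : V → W)
    (h2 : ∀ x y : V, ⟪x, y⟫ ≤ ⟪lam x, lam y⟫)
    (G : Set (V →L[ℝ] V))
    (hGinv : ∀ A ∈ G, ∃ B ∈ G, A * B = 1 ∧ B * A = 1)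
    (hGaut : ∀ A ∈ G, ∀ x : V, lam (A x) = lam x)
    (a b : V) (hsc : ⟪a, b⟫ = ⟪lam a, lam b⟫)
    (D : V →L[ℝ] V) (hD : ∀ t : ℝ, NormedSpace.exp (t • D) ∈ G) :
    ⟪D a, b⟫ = 0 := by
  rcases subsingleton_or_nontrivial (V →L[ℝ] V) with hV | hV
  · simp [Subsingleton.elim D 0]
  -- `V` need not be complete: where the exponential series diverges, `exp` is the junk value `0`,
  -- which is not invertible.
  have hsum (t : ℝ) : Summable fun n => (n !⁻¹ : ℝ) • (t • D) ^ n := by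
    refine summable_expSeries_of_exp_ne_zero ℝ fun h0 => ?_
    obtain ⟨B, -, hB, -⟩ := hGinv _ (hD t)
    rw [h0, zero_mul] at hB
    exact zero_ne_one hB
  have hderiv : HasDerivAt (fun t : ℝ => ⟪b, exp (t • D) a⟫) ⟪b, D a⟫ 0 :=
    ((innerSL ℝ b).comp (ContinuousLinearMap.apply ℝ V a)).hasFDerivAt.comp_hasDerivAt 0
      (hasDerivAt_exp_smul_zero_of_summable hsum)
  have hmax : IsLocalMax (fun t : ℝ => ⟪b, exp (t • D) a⟫) 0 :=
    Filter.Eventually.of_forall fun t => by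
      simpa only [real_inner_comm b, zero_smul, exp_zero, one_apply_eq_self] using
        inner_apply_le_of_lam_apply_eq h2 (hGaut _ (hD t)) hsc
  rw [real_inner_comm]
  exact hmax.hasDerivAt_eq_zero hderiv

theorem stmt9 {V W : Type*} [NormedAddCommGroup V] [InnerProductSpace ℝ V]
    [NormedAddCommGroup W] [InnerProductSpace ℝ W] (lam : V → W)
    (h1 : ∀ x : V, ‖lam x‖ = ‖x‖)
    (h2 : ∀ x y : V, ⟪x, y⟫ ≤ ⟪lam x, lam y⟫)
    (G : Set (V →L[ℝ] V)) (hGclosed : IsClosed G)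
    (hGone : (1 : V →L[ℝ] V) ∈ G)
    (hGmul : ∀ A ∈ G, ∀ B ∈ G, A * B ∈ G)
    (hGinv : ∀ A ∈ G, ∃ B ∈ G, A * B = 1 ∧ B * A = 1)
    (hGaut : ∀ A ∈ G, ∀ x : V, lam (A x) = lam x)
    (a b : V) (hsc : ⟪a, b⟫ = ⟪lam a, lam b⟫)
    (D : V →L[ℝ] V) (hD : ∀ t : ℝ, NormedSpace.exp (t • D) ∈ G) :
    ⟪D a, b⟫ = 0 :=
  stmt9_general lam h2 G hGinv hGaut a b hsc D hD
end

section
/- In a semi-FTvN system, the center C := {x ∈ V : ⟨x,y⟩ = ⟨λ(x), λ(y)⟩ for all y ∈ V} is a linear subspace of V, it is closed, and λ restricted to C is linear (additive and homogeneous). -/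
open scoped RealInnerProductSpace Matrix

theorem stmt11 {V W : Type*} [NormedAddCommGroup V] [InnerProductSpace ℝ V]
    [NormedAddCommGroup W] [InnerProductSpace ℝ W] (lam : V → W)
    (h1 : ∀ x : V, ‖lam x‖ = ‖x‖)
    (h2 : ∀ x y : V, ⟪x, y⟫ ≤ ⟪lam x, lam y⟫)
    (C : Set V) (hC : C = {x : V | ∀ y : V, ⟪x, y⟫ = ⟪lam x, lam y⟫}) :
    (0 : V) ∈ C ∧
    (∀ a ∈ C, ∀ b ∈ C, a + b ∈ C) ∧
    (∀ a ∈ C, ∀ r : ℝ, r • a ∈ C) ∧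
    IsClosed C ∧
    (∀ a ∈ C, ∀ b ∈ C, lam (a + b) = lam a + lam b) ∧
    (∀ a ∈ C, ∀ r : ℝ, lam (r • a) = r • lam a) := by
  have hlam0 : lam 0 = 0 := by
    have := h1 0
    simp only [norm_zero] at this
    exact norm_eq_zero.mp this
  -- homogeneity
  have hom : ∀ a ∈ C, ∀ r : ℝ, lam (r • a) = r • lam a := by
    intro a ha r
    rw [hC] at ha
    have hinner : ⟪lam (r • a), lam a⟫ = r * ‖a‖ ^ 2 := by
      rw [real_inner_comm, ← ha (r • a), real_inner_smul_right,
        real_inner_self_eq_norm_sq]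
    have hsq : ‖lam (r • a) - r • lam a‖ ^ 2 = 0 := by
      rw [norm_sub_sq_real, real_inner_smul_right, hinner, norm_smul, h1, h1,
        norm_smul]
      simp [mul_pow, sq_abs]
      ring
    have := pow_eq_zero_iff (n := 2) (by norm_num) |>.mp hsq
    rw [norm_eq_zero, sub_eq_zero] at this
    exact this
  -- additivity
  have add : ∀ a ∈ C, ∀ b ∈ C, lam (a + b) = lam a + lam b := by
    intro a ha b hb
    rw [hC] at ha hb
    have h1a : ⟪lam (a + b), lam a⟫ = ⟪a + b, a⟫ := by
      rw [real_inner_comm, ← ha (a + b), real_inner_comm]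
    have h1b : ⟪lam (a + b), lam b⟫ = ⟪a + b, b⟫ := by
      rw [real_inner_comm, ← hb (a + b), real_inner_comm]
    have hab : ⟪lam a, lam b⟫ = ⟪a, b⟫ := (ha b).symm
    have hsq : ‖lam (a + b) - (lam a + lam b)‖ ^ 2 = 0 := by
      rw [norm_sub_sq_real, inner_add_right, h1a, h1b, norm_add_sq_real, hab,
        h1, h1, h1, norm_add_sq_real, inner_add_left, inner_add_left,
        real_inner_self_eq_norm_sq, real_inner_self_eq_norm_sq]
      ring_nf
      rw [real_inner_comm]
      ring
    have := pow_eq_zero_iff (n := 2) (by norm_num) |>.mp hsq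
    rw [norm_eq_zero, sub_eq_zero] at this
    exact this
  have memadd : ∀ a ∈ C, ∀ b ∈ C, a + b ∈ C := by
    intro a ha b hb
    have hadd := add a ha b hb
    rw [hC] at ha hb ⊢
    intro y
    rw [hadd, inner_add_left, inner_add_left, ha y, hb y]
  have memsmul : ∀ a ∈ C, ∀ r : ℝ, r • a ∈ C := by
    intro a ha r
    have hhom := hom a ha r
    rw [hC] at ha ⊢
    intro y
    rw [hhom, real_inner_smul_left, real_inner_smul_left, ha y]
  -- lam is 1-Lipschitz hence continuous
  have hlip : LipschitzWith 1 lam := by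
    refine LipschitzWith.of_dist_le_mul fun x y => ?_
    simp only [NNReal.coe_one, one_mul, dist_eq_norm]
    have hsq : ‖lam x - lam y‖ ^ 2 ≤ ‖x - y‖ ^ 2 := by
      rw [norm_sub_sq_real, norm_sub_sq_real, h1, h1]
      have := h2 x y
      linarith
    exact (pow_le_pow_iff_left₀ (norm_nonneg _) (norm_nonneg _) two_ne_zero).mp hsq
  have hclosed : IsClosed C := by
    rw [hC]
    have : {x : V | ∀ y : V, ⟪x, y⟫ = ⟪lam x, lam y⟫} =
        ⋂ y : V, {x : V | ⟪x, y⟫ = ⟪lam x, lam y⟫} := by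
      ext x; simp
    rw [this]
    refine isClosed_iInter fun y => isClosed_eq ?_ ?_
    · exact continuous_id.inner continuous_const
    · exact (hlip.continuous.inner continuous_const)
  refine ⟨?_, memadd, memsmul, hclosed, add, hom⟩
  rw [hC]
  intro y
  rw [hlam0]
  simp
end

section
/- In a semi-FTvN system, if c is in the center (⟨c,y⟩ = ⟨λ(c), λ(y)⟩ for all y), then the λ-orbit of c is a singleton: λ(x) = λ(c) implies x = c. Consequently Ac = c for every automorphism A, and Dc = 0 for every D in the Lie algebra of the automorphism group. -/
/-!
If `lam x = lam c`, then `‖x‖ = ‖c‖` and `⟪x, c⟫ = ⟪lam c, lam c⟫ = ‖c‖²`, so `‖x - c‖² = 0`.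
Automorphisms and the maps `exp (t • D)` preserve `lam`, hence fix `c`, and differentiating
`t ↦ exp (t • D) c` at `0` gives `D c = 0`.

`V` need not be complete, so `exp (t • D)` is the sum of its series only when that series
converges; otherwise it is `0`, which is injective only on the zero space. Where the series
converges, the tail bound `‖exp x - 1 - x‖ ≤ ‖x‖² e^‖x‖` yields the derivative.
-/

open scoped RealInnerProductSpace Matrix

open Nat Asymptotics

namespace NormedSpace

variable {𝔸 : Type*} [NormedRing 𝔸] [NormedAlgebra ℝ 𝔸]

theorem norm_exp_sub_one_sub_le_of_summable {x : 𝔸}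
    (hx : Summable fun n => (n !⁻¹ : ℝ) • x ^ n) :
    ‖exp x - 1 - x‖ ≤ ‖x‖ ^ 2 * Real.exp ‖x‖ := by
  have htail : HasSum (fun n => ((n + 2)!⁻¹ : ℝ) • x ^ (n + 2)) (exp x - 1 - x) := by
    have h := (hasSum_nat_add_iff' 2).mpr hx.hasSum
    rw [← congrFun (exp_eq_tsum ℝ) x] at h
    simpa [Finset.sum_range_succ, sub_sub] using h
  have hbound : HasSum (fun n : ℕ => ‖x‖ ^ 2 * (‖x‖ ^ n / n !)) (‖x‖ ^ 2 * Real.exp ‖x‖) := by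
    rw [Real.exp_eq_exp_ℝ]
    exact (expSeries_div_hasSum_exp ‖x‖).mul_left _
  refine htail.norm_le_of_bounded hbound fun n => ?_
  calc ‖((n + 2)!⁻¹ : ℝ) • x ^ (n + 2)‖ ≤ (n !⁻¹ : ℝ) * ‖x‖ ^ (n + 2) := by
        rw [norm_smul, norm_inv, norm_natCast]
        gcongr ?_ * ?_
        · exact inv_anti₀ (by positivity) (mod_cast factorial_le (by omega))
        · exact norm_pow_le' x (by omega)
    _ = ‖x‖ ^ 2 * (‖x‖ ^ n / n !) := by ring

theorem hasDerivAt_exp_smul_zero_of_summable_s12 {a : 𝔸}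
    (ha : ∀ t : ℝ, Summable fun n => (n !⁻¹ : ℝ) • (t • a) ^ n) :
    HasDerivAt (fun t : ℝ => exp (t • a)) a 0 := by
  rw [hasDerivAt_iff_isLittleO_nhds_zero]
  refine IsBigO.trans_isLittleO ?_ (isLittleO_pow_id one_lt_two)
  refine IsBigO.of_bound (‖a‖ ^ 2 * Real.exp ‖a‖) ?_
  filter_upwards [Metric.closedBall_mem_nhds (0 : ℝ) one_pos] with t ht
  rw [mem_closedBall_zero_iff] at ht
  simp only [zero_add, zero_smul, exp_zero, norm_pow]
  calc ‖exp (t • a) - 1 - t • a‖ ≤ ‖t • a‖ ^ 2 * Real.exp ‖t • a‖ :=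
        norm_exp_sub_one_sub_le_of_summable (ha t)
    _ ≤ ‖t‖ ^ 2 * ‖a‖ ^ 2 * Real.exp ‖a‖ := by
        rw [norm_smul, mul_pow]
        gcongr
        exact mul_le_of_le_one_left (norm_nonneg a) ht
    _ = _ := by ring

theorem summable_expSeries_of_injective_exp {V : Type*} [NormedAddCommGroup V]
    [NormedSpace ℝ V] [Nontrivial V] {D : V →L[ℝ] V}
    (hD : Function.Injective (exp D : V →L[ℝ] V)) :
    Summable fun n => (n !⁻¹ : ℝ) • D ^ n := by
  by_contra hsum
  have hzero : exp D = 0 := by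
    rw [exp_eq_tsum ℝ]
    exact tsum_eq_zero_of_not_summable hsum
  obtain ⟨v, hv⟩ := exists_ne (0 : V)
  exact hv (hD (by simp [hzero]))

end NormedSpace

theorem eq_of_map_eq_map_of_inner_eq {V W : Type*} [NormedAddCommGroup V] [InnerProductSpace ℝ V]
    [NormedAddCommGroup W] [InnerProductSpace ℝ W] {lam : V → W}
    (h1 : ∀ x : V, ‖lam x‖ = ‖x‖) {c : V} (hc : ∀ y : V, ⟪c, y⟫ = ⟪lam c, lam y⟫) {x : V}
    (hx : lam x = lam c) : x = c := by
  have hcx : ⟪x, c⟫ = ‖c‖ ^ 2 := by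
    rw [real_inner_comm, hc x, hx, real_inner_self_eq_norm_sq, h1]
  have hnorm : ‖x‖ = ‖c‖ := by rw [← h1 x, hx, h1]
  have hdist : ‖x - c‖ ^ 2 = 0 := by
    rw [norm_sub_sq_real, hnorm, hcx]
    ring
  simpa [sub_eq_zero] using hdist

open NormedSpace in
theorem stmt12_general {V W : Type*} [NormedAddCommGroup V] [InnerProductSpace ℝ V]
    [NormedAddCommGroup W] [InnerProductSpace ℝ W] (lam : V → W)
    (h1 : ∀ x : V, ‖lam x‖ = ‖x‖)
    (c : V) (hc : ∀ y : V, ⟪c, y⟫ = ⟪lam c, lam y⟫) :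
    (∀ x : V, lam x = lam c → x = c) ∧
    (∀ A : V →L[ℝ] V, Function.Bijective A → (∀ x : V, lam (A x) = lam x) → A c = c) ∧
    (∀ D : V →L[ℝ] V,
      (∀ t : ℝ, Function.Bijective ((NormedSpace.exp (t • D) : V →L[ℝ] V)) ∧
        ∀ x : V, lam ((NormedSpace.exp (t • D) : V →L[ℝ] V) x) = lam x) → D c = 0) := by
  have hfix : ∀ x : V, lam x = lam c → x = c := fun x => eq_of_map_eq_map_of_inner_eq h1 hc
  refine ⟨hfix, fun A _ hA => hfix _ (hA c), fun D hD => ?_⟩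
  rcases subsingleton_or_nontrivial V with _ | _
  · exact Subsingleton.elim _ _
  have hderiv : HasDerivAt (fun t : ℝ => exp (t • D) c) (D c) 0 :=
    (ContinuousLinearMap.apply ℝ V c).hasFDerivAt.comp_hasDerivAt 0
      (hasDerivAt_exp_smul_zero_of_summable_s12 fun t =>
        summable_expSeries_of_injective_exp (hD t).1.1)
  have hconst : (fun t : ℝ => exp (t • D) c) = fun _ => c :=
    funext fun t => hfix _ ((hD t).2 c)
  rw [hconst] at hderiv
  exact hderiv.unique (hasDerivAt_const 0 c)

theorem stmt12 {V W : Type*} [NormedAddCommGroup V] [InnerProductSpace ℝ V]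
    [NormedAddCommGroup W] [InnerProductSpace ℝ W] (lam : V → W)
    (h1 : ∀ x : V, ‖lam x‖ = ‖x‖)
    (h2 : ∀ x y : V, ⟪x, y⟫ ≤ ⟪lam x, lam y⟫)
    (c : V) (hc : ∀ y : V, ⟪c, y⟫ = ⟪lam c, lam y⟫) :
    (∀ x : V, lam x = lam c → x = c) ∧
    (∀ A : V →L[ℝ] V, Function.Bijective A → (∀ x : V, lam (A x) = lam x) → A c = c) ∧
    (∀ D : V →L[ℝ] V,
      (∀ t : ℝ, Function.Bijective ((NormedSpace.exp (t • D) : V →L[ℝ] V)) ∧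
        ∀ x : V, lam ((NormedSpace.exp (t • D) : V →L[ℝ] V) x) = lam x) → D c = 0) :=
  stmt12_general lam h1 c hc
end

section
/- For the group G of linear transformations on n×n real matrices of the form X ↦ UXV with U, V orthogonal, two matrices X, Y ∈ Mₙ commute relative to G (i.e., ⟨T(X), Y⟩ = 0 for all T ∈ Lie(G)) if and only if XYᵀ and XᵀY are both symmetric. -/
open scoped RealInnerProductSpace Matrix

lemma aux_eq_zero {n : ℕ} (S : Matrix (Fin n) (Fin n) ℝ)
    (h : (S * Sᵀ).trace = 0) : S = 0 := by
  have h' : ∑ i, ∑ j, S i j * S i j = 0 := by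
    simpa [Matrix.trace, Matrix.mul_apply, Matrix.diag] using h
  ext i j
  have h1 : ∀ i ∈ Finset.univ, (0:ℝ) ≤ ∑ j, S i j * S i j := fun i _ =>
    Finset.sum_nonneg fun j _ => mul_self_nonneg _
  have h2 := (Finset.sum_eq_zero_iff_of_nonneg h1).mp h' i (Finset.mem_univ i)
  have h3 : ∀ j ∈ Finset.univ, (0:ℝ) ≤ S i j * S i j := fun j _ => mul_self_nonneg _
  have := (Finset.sum_eq_zero_iff_of_nonneg h3).mp h2 j (Finset.mem_univ j)
  simpa [mul_self_eq_zero] using this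

lemma aux_symm {n : ℕ} (M : Matrix (Fin n) (Fin n) ℝ)
    (h : ∀ A : Matrix (Fin n) (Fin n) ℝ, Aᵀ = -A → (A * M).trace = 0) :
    Mᵀ = M := by
  set S := M - Mᵀ with hS
  have hskew : Sᵀ = -S := by simp [hS, sub_eq_neg_add]
  have h1 := h S hskew
  have h2 : (S * Mᵀ).trace = 0 := by
    have e : (S * Mᵀ).trace = (M * Sᵀ).trace := by
      rw [← Matrix.trace_transpose (S * Mᵀ), Matrix.transpose_mul,
        Matrix.transpose_transpose]
    rw [e, hskew, Matrix.mul_neg, Matrix.trace_neg, Matrix.trace_mul_comm]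
    simpa using h1
  have h3 : (S * Sᵀ).trace = 0 := by
    have e : Sᵀ = Mᵀ - M := by rw [hskew, hS, neg_sub]
    rw [e, Matrix.mul_sub, Matrix.trace_sub, h1, h2, sub_zero]
  have := aux_eq_zero S h3
  have : M - Mᵀ = 0 := by rwa [← hS]
  rw [sub_eq_zero] at this
  exact this.symm

lemma aux_symm' {n : ℕ} (M : Matrix (Fin n) (Fin n) ℝ) (hM : Mᵀ = M)
    (A : Matrix (Fin n) (Fin n) ℝ) (hA : Aᵀ = -A) : (A * M).trace = 0 := by
  have e : (A * M).trace = -(A * M).trace := by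
    conv_lhs => rw [← Matrix.trace_transpose (A * M), Matrix.transpose_mul, hM, hA,
      Matrix.mul_neg, Matrix.trace_neg, Matrix.trace_mul_comm]
  linarith

theorem stmt16 {n : ℕ} (X Y : Matrix (Fin n) (Fin n) ℝ) :
    (∀ A B : Matrix (Fin n) (Fin n) ℝ, Aᵀ = -A → Bᵀ = -B →
      ((A * X + X * B) * Yᵀ).trace = 0) ↔
      ((X * Yᵀ)ᵀ = X * Yᵀ ∧ (Xᵀ * Y)ᵀ = Xᵀ * Y) := by
  have key : ∀ A B : Matrix (Fin n) (Fin n) ℝ,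
      ((A * X + X * B) * Yᵀ).trace = (A * (X * Yᵀ)).trace + (B * (Yᵀ * X)).trace := by
    intro A B
    rw [Matrix.add_mul, Matrix.trace_add, Matrix.mul_assoc,
      Matrix.mul_assoc, Matrix.trace_mul_comm X (B * Yᵀ), Matrix.mul_assoc]
  constructor
  · intro h
    constructor
    · apply aux_symm
      intro A hA
      have := h A 0 hA (by simp)
      rw [key] at this
      simpa using this
    · have hsym : (Yᵀ * X)ᵀ = Yᵀ * X := by
        apply aux_symm
        intro B hB
        have := h 0 B (by simp) hB
        rw [key] at this
        simpa using this
      rw [Matrix.transpose_mul, Matrix.transpose_transpose] at hsym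
      rw [Matrix.transpose_mul, Matrix.transpose_transpose, hsym]
  · rintro ⟨h1, h2⟩ A B hA hB
    rw [key, aux_symm' _ h1 A hA, aux_symm' _ ?_ B hB, add_zero]
    rw [Matrix.transpose_mul, Matrix.transpose_transpose, ← h2, Matrix.transpose_mul,
      Matrix.transpose_transpose]
end

section
/- In a finite-dimensional semi-FTvN system arising from a complete hyperbolic polynomial, with λ: V → ℝⁿ the eigenvalue map satisfying the Lidskii majorization λ(a) − λ(b) ≺ λ(a−b): elements a and b strongly commute (‖λ(a) − λ(b)‖ = ‖a − b‖) if and only if (λ(a) − λ(b))^↓ = λ(a − b), where v^↓ denotes the decreasing rearrangement of v ∈ ℝⁿ. -/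
open scoped RealInnerProductSpace Matrix

/-- The decreasing rearrangement of a vector in ℝⁿ. -/
noncomputable def decSort {n : ℕ} (v : Fin n → ℝ) : Fin n → ℝ :=
  fun i => - (((fun j => - v j) ∘ Tuple.sort (fun j => - v j)) i)

/-!
Write `u = λ(a) - λ(b)` and `v = λ(a - b)`. By the Lidskii inequality `u = A v` with `A` doubly
stochastic, so by Birkhoff's theorem `u` is a convex combination of the permuted vectors `v ∘ σ`,
all of Euclidean norm `‖v‖ = ‖a - b‖`. If `‖u‖ = ‖v‖`, then `u` lies on the sphere bounding that
ball; by strict convexity of the Euclidean norm it is an extreme point of the ball, hence one of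
the `v ∘ σ`, and sorting it returns the already decreasing `v`. Conversely, sorting is a
permutation of coordinates and so preserves the norm.
-/

open Set Equiv

theorem mem_of_mem_convexHull_of_norm_le {E : Type*} [NormedAddCommGroup E] [NormedSpace ℝ E]
    [StrictConvexSpace ℝ E] {s : Set E} {u : E} (hu : u ∈ convexHull ℝ s)
    (hs : ∀ x ∈ s, ‖x‖ ≤ ‖u‖) : u ∈ s := by
  rcases eq_or_ne ‖u‖ 0 with hu0 | hu0
  · obtain ⟨x, hx⟩ := convexHull_nonempty_iff.mp ⟨u, hu⟩
    have hx0 : x = 0 := norm_le_zero_iff.mp (hu0 ▸ hs x hx)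
    rwa [norm_eq_zero.mp hu0, ← hx0]
  · have hball : convexHull ℝ s ⊆ Metric.closedBall 0 ‖u‖ :=
      convexHull_min (fun x hx => mem_closedBall_zero_iff.mpr (hs x hx)) (convex_closedBall 0 _)
    have hsphere : u ∈ Metric.sphere (0 : E) ‖u‖ := mem_sphere_zero_iff_norm.mpr rfl
    exact extremePoints_convexHull_subset <| inter_extremePoints_subset_extremePoints_of_subset
      hball ⟨hu, StrictConvexSpace.sphere_subset_extremePoints_closedBall 0 hu0 hsphere⟩

section Permutations

variable {ι : Type*} [Fintype ι]

theorem EuclideanSpace.norm_toLp_comp_perm (v : ι → ℝ) (σ : Perm ι) :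
    ‖WithLp.toLp 2 (v ∘ σ)‖ = ‖WithLp.toLp 2 v‖ := by
  simp [EuclideanSpace.norm_eq, σ.sum_comp _ (fun i ↦ v i ^ 2)]

variable [DecidableEq ι]

theorem Matrix.toLp_mulVec_mem_convexHull {A : Matrix ι ι ℝ} (hA : A ∈ doublyStochastic ℝ ι)
    (v : ι → ℝ) :
    WithLp.toLp 2 (A *ᵥ v) ∈ convexHull ℝ (range fun σ : Perm ι => WithLp.toLp 2 (v ∘ σ)) := by
  have hlin : IsLinearMap ℝ fun M : Matrix ι ι ℝ => WithLp.toLp 2 (M *ᵥ v) :=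
    ⟨fun M N => by simp [Matrix.add_mulVec], fun c M => by simp [Matrix.smul_mulVec]⟩
  rw [← SetLike.mem_coe, doublyStochastic_eq_convexHull_permMatrix] at hA
  convert hlin.image_convexHull _ ▸ mem_image_of_mem _ hA using 2
  ext
  simp [Matrix.permMatrix_mulVec]

theorem exists_perm_eq_comp_of_norm_mulVec_eq {A : Matrix ι ι ℝ} (hA : A ∈ doublyStochastic ℝ ι)
    {v : ι → ℝ} (hnorm : ‖WithLp.toLp 2 (A *ᵥ v)‖ = ‖WithLp.toLp 2 v‖) :
    ∃ σ : Perm ι, A *ᵥ v = v ∘ σ := by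
  obtain ⟨σ, hσ⟩ := mem_of_mem_convexHull_of_norm_le (Matrix.toLp_mulVec_mem_convexHull hA v) <| by
    rintro _ ⟨σ, rfl⟩
    rw [EuclideanSpace.norm_toLp_comp_perm, hnorm]
  exact ⟨σ, congrArg WithLp.ofLp hσ.symm⟩

end Permutations

section DecSort

variable {n : ℕ}

theorem decSort_eq_comp_sort (v : Fin n → ℝ) : decSort v = v ∘ Tuple.sort (fun j => - v j) := by
  ext
  simp [decSort]

theorem decSort_comp_perm (v : Fin n → ℝ) (σ : Perm (Fin n)) : decSort (v ∘ σ) = decSort v := by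
  ext i
  exact congrArg (- · i) (Tuple.comp_perm_comp_sort_eq_comp_sort (f := fun j => - v j) (σ := σ))

theorem decSort_eq_self_of_antitone {v : Fin n → ℝ} (hv : Antitone v) : decSort v = v := by
  rw [decSort_eq_comp_sort, Tuple.sort_eq_refl_iff_monotone.mpr hv.neg]
  rfl

end DecSort

theorem stmt18_general {V : Type*} [NormedAddCommGroup V] {n : ℕ} (lam : V → EuclideanSpace ℝ (Fin n))
    (h1 : ∀ x : V, ‖lam x‖ = ‖x‖)
    (hdec : ∀ x : V, ∀ i j : Fin n, i ≤ j → lam x j ≤ lam x i)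
    (hlid : ∀ a b : V, ∃ A ∈ doublyStochastic ℝ (Fin n),
      (fun i => lam a i - lam b i) = A.mulVec (fun i => lam (a - b) i))
    (a b : V) :
    ‖lam a - lam b‖ = ‖a - b‖ ↔
      decSort (fun i => lam a i - lam b i) = (fun i => lam (a - b) i) := by
  rw [← h1 (a - b)]
  constructor
  · intro hnorm
    obtain ⟨A, hA, hu⟩ := hlid a b
    obtain ⟨σ, hσ⟩ :=
      exists_perm_eq_comp_of_norm_mulVec_eq hA (v := fun i => lam (a - b) i) (by rwa [← hu])
    rw [hu, hσ, decSort_comp_perm, decSort_eq_self_of_antitone (hdec (a - b))]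
  · intro hsort
    calc ‖lam a - lam b‖ = ‖WithLp.toLp 2 (decSort fun i => lam a i - lam b i)‖ := by
          rw [decSort_eq_comp_sort, EuclideanSpace.norm_toLp_comp_perm]; rfl
      _ = ‖lam (a - b)‖ := by rw [hsort]

theorem stmt18 {V : Type*} [NormedAddCommGroup V] [InnerProductSpace ℝ V]
    [FiniteDimensional ℝ V] {n : ℕ} (lam : V → EuclideanSpace ℝ (Fin n))
    (h1 : ∀ x : V, ‖lam x‖ = ‖x‖)
    (h2 : ∀ x y : V, ⟪x, y⟫ ≤ ⟪lam x, lam y⟫)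
    (hdec : ∀ x : V, ∀ i j : Fin n, i ≤ j → lam x j ≤ lam x i)
    (hlid : ∀ a b : V, ∃ A ∈ doublyStochastic ℝ (Fin n),
      (fun i => lam a i - lam b i) = A.mulVec (fun i => lam (a - b) i))
    (a b : V) :
    ‖lam a - lam b‖ = ‖a - b‖ ↔
      decSort (fun i => lam a i - lam b i) = (fun i => lam (a - b) i) :=
  stmt18_general lam h1 hdec hlid a b
end

section
/- Let V be a real inner product space, G a closed subgroup of the invertible bounded linear maps on V, E ⊆ V with A(E) ⊆ E for all A ∈ G, and F: V → ℝ with F(Ax) = F(x) for all A ∈ G and x ∈ V. Let Θ: V → ℝ be Fréchet differentiable. If a ∈ E is a local minimizer (or maximizer) of x ↦ Θ(x) + F(x) over E, then ⟨Da, Θ′(a)⟩ = 0 for every D ∈ Lie(G). -/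
/-!
Along the orbit `t ↦ exp (t • D) a`, which stays in `E` and on which `F` is constant, the
function `t ↦ Θ (exp (t • D) a) + F a` has a local extremum at `0`; its derivative there is
`⟪θ' a, D a⟫`.
-/

open scoped RealInnerProductSpace

open Filter

theorem IsLocalExtrOn.isLocalExtr_comp {X Y β : Type*} [TopologicalSpace X]
    [TopologicalSpace Y] [Preorder β] {f : X → β} {s : Set X} {c : Y → X} {b : Y}
    (hf : IsLocalExtrOn f s (c b)) (hcs : ∀ y, c y ∈ s) (hc : ContinuousAt c b) :
    IsLocalExtr (f ∘ c) b :=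
  hf.comp_tendsto (tendsto_nhdsWithin_iff.2 ⟨hc, Eventually.of_forall hcs⟩)

theorem HasGradientAt.comp_hasDerivAt {V : Type*} [NormedAddCommGroup V]
    [InnerProductSpace ℝ V] [CompleteSpace V] {f : V → ℝ} {f' v : V} {c : ℝ → V} {t : ℝ}
    (hf : HasGradientAt f f' (c t)) (hc : HasDerivAt c v t) :
    HasDerivAt (f ∘ c) ⟪f', v⟫ t := by
  simpa only [InnerProductSpace.toDual_apply_apply] using hf.hasFDerivAt.comp_hasDerivAt t hc

theorem hasDerivAt_exp_smul_apply {𝕂 E : Type*} [RCLike 𝕂] [NormedAddCommGroup E]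
    [NormedSpace 𝕂 E] [CompleteSpace E] (D : E →L[𝕂] E) (x : E) (t : 𝕂) :
    HasDerivAt (fun u : 𝕂 => NormedSpace.exp (u • D) x) (NormedSpace.exp (t • D) (D x)) t := by
  simpa only [mul_apply_eq_comp, map_zero, add_zero] using
    (hasDerivAt_exp_smul_const D t).clm_apply (hasDerivAt_const t x)

theorem inner_gradient_eq_zero_of_isLocalExtrOn_add {V : Type*} [NormedAddCommGroup V]
    [InnerProductSpace ℝ V] [CompleteSpace V] {f g : V → ℝ} {s : Set V} {f' v : V}
    {a : V} {c : ℝ → V} (hext : IsLocalExtrOn (fun x => f x + g x) s a)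
    (hf : HasGradientAt f f' a) (hc0 : c 0 = a) (hc : HasDerivAt c v 0) (hcs : ∀ t, c t ∈ s)
    (hgc : ∀ t, g (c t) = g a) :
    ⟪f', v⟫ = 0 := by
  subst hc0
  have hextr : IsLocalExtr (fun t => f (c t) + g (c 0)) 0 := by
    simpa only [Function.comp_def, hgc] using hext.isLocalExtr_comp hcs hc.continuousAt
  exact hextr.hasDerivAt_eq_zero ((hf.comp_hasDerivAt hc).add_const _)

theorem stmt19_general {V : Type*} [NormedAddCommGroup V] [InnerProductSpace ℝ V]
    [CompleteSpace V]
    (G : Set (V →L[ℝ] V))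
    (E : Set V) (hE : ∀ A ∈ G, ∀ x ∈ E, A x ∈ E)
    (F : V → ℝ) (hF : ∀ A ∈ G, ∀ x : V, F (A x) = F x)
    (Θ : V → ℝ) (θ' : V → V) (hΘ : ∀ x : V, HasGradientAt Θ (θ' x) x)
    (a : V) (ha : a ∈ E)
    (hopt : IsLocalMinOn (fun x => Θ x + F x) E a ∨
            IsLocalMaxOn (fun x => Θ x + F x) E a)
    (D : V →L[ℝ] V) (hD : ∀ t : ℝ, NormedSpace.exp (t • D) ∈ G) :
    ⟪D a, θ' a⟫ = 0 := by
  set c : ℝ → V := fun t => NormedSpace.exp (t • D) a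
  have hc0 : c 0 = a := by simp [c, NormedSpace.exp_zero]
  have hc : HasDerivAt c (D a) 0 := by
    simpa [NormedSpace.exp_zero] using hasDerivAt_exp_smul_apply D a (0 : ℝ)
  rw [real_inner_comm]
  exact inner_gradient_eq_zero_of_isLocalExtrOn_add hopt (hΘ a) hc0 hc
    (fun t => hE _ (hD t) a ha) (fun t => hF _ (hD t) a)

theorem stmt19 {V : Type*} [NormedAddCommGroup V] [InnerProductSpace ℝ V]
    [CompleteSpace V]
    (G : Set (V →L[ℝ] V)) (hGclosed : IsClosed G)
    (hGone : (1 : V →L[ℝ] V) ∈ G)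
    (hGmul : ∀ A ∈ G, ∀ B ∈ G, A * B ∈ G)
    (hGinv : ∀ A ∈ G, ∃ B ∈ G, A * B = 1 ∧ B * A = 1)
    (E : Set V) (hE : ∀ A ∈ G, ∀ x ∈ E, A x ∈ E)
    (F : V → ℝ) (hF : ∀ A ∈ G, ∀ x : V, F (A x) = F x)
    (Θ : V → ℝ) (θ' : V → V) (hΘ : ∀ x : V, HasGradientAt Θ (θ' x) x)
    (a : V) (ha : a ∈ E)
    (hopt : IsLocalMinOn (fun x => Θ x + F x) E a ∨
            IsLocalMaxOn (fun x => Θ x + F x) E a)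
    (D : V →L[ℝ] V) (hD : ∀ t : ℝ, NormedSpace.exp (t • D) ∈ G) :
    ⟪D a, θ' a⟫ = 0 :=
  stmt19_general G E hE F hF Θ θ' hΘ a ha hopt D hD
end
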